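/- Fix real numbers d₁,…,d_s and suppose the interval I = (𝓛, 𝓡) is non-empty. Suppose lim_{z→𝓛⁺} g(z) = −∞, lim_{z→𝓡⁻} g(z) = −∞, lim_{z→𝓛⁺} g′(z) = +∞, and lim_{z→𝓡⁻} g′(z) = −∞. Then there exists K ∈ ℝ such that the equation g(z) = K has at least two distinct solutions z₁, z₂ ∈ I with g′(z₁) < 0 and g′(z₂) < 0 if and only if there exist points z̃₁, z̃₂ ∈ I with z̃₁ < z̃₂, g′(z̃₁) < 0 and g′(z̃₂) > 0. (This is Lemma 4.2(ii).) -/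

import Mathlib

open Finset

/-- The function `g` from the paper (eq. (3.4)/(4.4)), written with explicit sign classes. -/
noncomputable def gFun {s : ℕ} (S1 S2 S3 S4 : Finset (Fin s)) (a d : Fin s → ℝ) (z : ℝ) : ℝ :=
  ∑ i ∈ S1, a i * Real.log (z + d i) - ∑ i ∈ S2, a i * Real.log (d i - z)
    + ∑ i ∈ S3, a i * Real.log (d i - z) - ∑ i ∈ S4, a i * Real.log (z + d i)

/-- The derivative `g'` of `g` (eq. (4.10)). -/
noncomputable def gDeriv {s : ℕ} (S1 S2 S3 S4 : Finset (Fin s)) (a d : Fin s → ℝ) (z : ℝ) : ℝ :=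
  ∑ i ∈ S1, a i / (z + d i) + ∑ i ∈ S2, a i / (d i - z)
    - ∑ i ∈ S3, a i / (d i - z) - ∑ i ∈ S4, a i / (z + d i)

/-- Membership in the open interval `I = (𝓛, 𝓡)`, where `𝓛 = max_{i ∈ S1 ∪ S4} (-d i)`
(or `-∞` if `S1 ∪ S4 = ∅`) and `𝓡 = min_{i ∈ S2 ∪ S3} d i` (or `+∞` if `S2 ∪ S3 = ∅`). -/
def memI {s : ℕ} (S1 S2 S3 S4 : Finset (Fin s)) (d : Fin s → ℝ) (z : ℝ) : Prop :=
  (∀ i ∈ S1 ∪ S4, -d i < z) ∧ (∀ i ∈ S2 ∪ S3, z < d i)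

/-- The multistability criterion: there exist pairwise distinct `d i`, a level `K` and two
distinct points of `I` where `g` takes the value `K` with negative derivative. -/
def MultistabCriterion {s : ℕ} (S1 S2 S3 S4 : Finset (Fin s)) (a : Fin s → ℝ) : Prop :=
  ∃ d : Fin s → ℝ, Function.Injective d ∧
    ∃ K z₁ z₂ : ℝ, z₁ ≠ z₂ ∧
      memI S1 S2 S3 S4 d z₁ ∧ memI S1 S2 S3 S4 d z₂ ∧
      gFun S1 S2 S3 S4 a d z₁ = K ∧ gFun S1 S2 S3 S4 a d z₂ = K ∧
      gDeriv S1 S2 S3 S4 a d z₁ < 0 ∧ gDeriv S1 S2 S3 S4 a d z₂ < 0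

/-- The filter of approach to the left endpoint `𝓛` of `I` from the right:
`𝓝[>] 𝓛` if `𝓛 = max_{i ∈ S1 ∪ S4} (-d i)` is finite, and `atBot` if `𝓛 = -∞`. -/
noncomputable def leftFilter {s : ℕ} (S1 S4 : Finset (Fin s)) (d : Fin s → ℝ) : Filter ℝ :=
  if h : (S1 ∪ S4).Nonempty then
    nhdsWithin ((S1 ∪ S4).sup' h fun i => -d i) (Set.Ioi ((S1 ∪ S4).sup' h fun i => -d i))
  else Filter.atBot

/-- The filter of approach to the right endpoint `𝓡` of `I` from the left:
`𝓝[<] 𝓡` if `𝓡 = min_{i ∈ S2 ∪ S3} d i` is finite, and `atTop` if `𝓡 = +∞`. -/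
noncomputable def rightFilter {s : ℕ} (S2 S3 : Finset (Fin s)) (d : Fin s → ℝ) : Filter ℝ :=
  if h : (S2 ∪ S3).Nonempty then
    nhdsWithin ((S2 ∪ S3).inf' h d) (Set.Iio ((S2 ∪ S3).inf' h d))
  else Filter.atTop

open Set Filter in
private lemma slope_right_neg {f : ℝ → ℝ} {l z b : ℝ} (hf : HasDerivAt f l z) (hl : l < 0)
    (hb : z < b) : ∃ x, z < x ∧ x < b ∧ f x < f z := by
  rw [hasDerivAt_iff_tendsto_slope] at hf
  have h1 : ∀ᶠ x in nhdsWithin z {z}ᶜ, slope f z x < 0 := hf (Iio_mem_nhds hl)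
  have h2 : nhdsWithin z (Ioi z) ≤ nhdsWithin z {z}ᶜ :=
    nhdsWithin_mono _ (fun x hx => ne_of_gt hx)
  have h3 : Ioo z b ∈ nhdsWithin z (Ioi z) := Ioo_mem_nhdsGT_of_mem ⟨le_refl z, hb⟩
  have h4 : ∀ᶠ x in nhdsWithin z (Ioi z), slope f z x < 0 := h2 h1
  obtain ⟨x, hs, hx1, hx2⟩ := (h4.and (eventually_of_mem h3 (fun x hx => hx))).exists
  refine ⟨x, hx1, hx2, ?_⟩
  rw [slope_def_field, div_neg_iff] at hs
  rcases hs with ⟨_, h⟩ | ⟨h, _⟩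
  · linarith
  · linarith

open Set Filter in
private lemma slope_left_gt {f : ℝ → ℝ} {l z b : ℝ} (hf : HasDerivAt f l z) (hl : l < 0)
    (hb : b < z) : ∃ x, b < x ∧ x < z ∧ f z < f x := by
  rw [hasDerivAt_iff_tendsto_slope] at hf
  have h1 : ∀ᶠ x in nhdsWithin z {z}ᶜ, slope f z x < 0 := hf (Iio_mem_nhds hl)
  have h2 : nhdsWithin z (Iio z) ≤ nhdsWithin z {z}ᶜ :=
    nhdsWithin_mono _ (fun x hx => ne_of_lt hx)
  have h3 : Ioo b z ∈ nhdsWithin z (Iio z) := Ioo_mem_nhdsLT_of_mem ⟨hb, le_refl z⟩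
  have h4 : ∀ᶠ x in nhdsWithin z (Iio z), slope f z x < 0 := h2 h1
  obtain ⟨x, hs, hx1, hx2⟩ := (h4.and (eventually_of_mem h3 (fun x hx => hx))).exists
  refine ⟨x, hx1, hx2, ?_⟩
  rw [slope_def_field, div_neg_iff] at hs
  rcases hs with ⟨_, h⟩ | ⟨h, _⟩
  · linarith
  · linarith

private lemma slope_left_lt {f : ℝ → ℝ} {l z b : ℝ} (hf : HasDerivAt f l z) (hl : 0 < l)
    (hb : b < z) : ∃ x, b < x ∧ x < z ∧ f x < f z := by
  obtain ⟨x, h1, h2, h3⟩ := slope_left_gt (f := fun y => -f y) hf.neg (by linarith) hb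
  exact ⟨x, h1, h2, by simpa using h3⟩

open Set Filter in
private lemma lemA {f f' : ℝ → ℝ} {u v α β : ℝ} (huv : u < v)
    (hd : ∀ x ∈ Set.Icc u v, HasDerivAt f (f' x) x)
    (hab : α < β) (hu : β ≤ f u) (hv : f v ≤ α) :
    ∃ ζ, ζ ∈ Set.Ioo u v ∧ f' ζ < 0 ∧ α < f ζ ∧ f ζ < β := by
  have hc : ContinuousOn f (Set.Icc u v) := fun x hx =>
    ((hd x hx).continuousAt).continuousWithinAt
  set Sa : Set ℝ := Icc u v ∩ f ⁻¹' Iic α with hSa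
  have hSaclosed : IsClosed Sa := hc.preimage_isClosed_of_isClosed isClosed_Icc isClosed_Iic
  have hSane : Sa.Nonempty := ⟨v, ⟨le_of_lt huv, le_refl v⟩, hv⟩
  have hSabdd : BddBelow Sa := ⟨u, fun x hx => hx.1.1⟩
  set v' := sInf Sa with hv'
  have hv'mem : v' ∈ Sa := hSaclosed.csInf_mem hSane hSabdd
  have hv'le : ∀ x ∈ Sa, v' ≤ x := fun x hx => csInf_le hSabdd hx
  have huv' : u < v' := by
    rcases lt_or_eq_of_le hv'mem.1.1 with h | h
    · exact h
    · exfalso; have h2 := hv'mem.2; rw [← h] at h2; simp only [Set.mem_preimage, Set.mem_Iic] at h2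
      linarith
  have hgt : ∀ x, u ≤ x → x < v' → α < f x := by
    intro x hx1 hx2
    by_contra h
    push_neg at h
    exact absurd (hv'le x ⟨⟨hx1, le_trans (le_of_lt hx2) hv'mem.1.2⟩, h⟩) (not_le.mpr hx2)
  set Sb : Set ℝ := Icc u v' ∩ f ⁻¹' Ici β with hSb
  have hcb : ContinuousOn f (Set.Icc u v') := hc.mono (Icc_subset_Icc le_rfl hv'mem.1.2)
  have hSbclosed : IsClosed Sb := hcb.preimage_isClosed_of_isClosed isClosed_Icc isClosed_Ici
  have hSbne : Sb.Nonempty := ⟨u, ⟨le_refl u, le_of_lt huv'⟩, hu⟩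
  have hSbbdd : BddAbove Sb := ⟨v', fun x hx => hx.1.2⟩
  set u' := sSup Sb with hu'
  have hu'mem : u' ∈ Sb := hSbclosed.csSup_mem hSbne hSbbdd
  have hu'ge : ∀ x ∈ Sb, x ≤ u' := fun x hx => le_csSup hSbbdd hx
  have hu'v' : u' < v' := by
    rcases lt_or_eq_of_le hu'mem.1.2 with h | h
    · exact h
    · exfalso
      have h1 : β ≤ f u' := hu'mem.2
      have h2 : f v' ≤ α := hv'mem.2
      rw [h] at h1; linarith
  have hlt : ∀ x, u' < x → x ≤ v' → f x < β := by
    intro x hx1 hx2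
    by_contra h
    push_neg at h
    exact absurd (hu'ge x ⟨⟨le_trans hu'mem.1.1 (le_of_lt hx1), hx2⟩, h⟩) (not_le.mpr hx1)
  have hsub : Icc u' v' ⊆ Icc u v := Icc_subset_Icc hu'mem.1.1 hv'mem.1.2
  obtain ⟨ζ, hζ, hslope⟩ := exists_hasDerivAt_eq_slope f f' hu'v'
    (hc.mono hsub) (fun x hx => hd x (hsub (Ioo_subset_Icc_self hx)))
  refine ⟨ζ, ⟨lt_of_le_of_lt hu'mem.1.1 hζ.1, lt_of_lt_of_le hζ.2 hv'mem.1.2⟩, ?_, ?_, ?_⟩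
  · rw [hslope]
    have h1 : f v' ≤ α := hv'mem.2
    have h2 : β ≤ f u' := hu'mem.2
    apply div_neg_of_neg_of_pos <;> linarith [hζ.1, hζ.2]
  · exact hgt ζ (le_trans hu'mem.1.1 (le_of_lt hζ.1)) hζ.2
  · exact hlt ζ hζ.1 (le_of_lt hζ.2)

section gAux
variable {s : ℕ} {S1 S2 S3 S4 : Finset (Fin s)} {a d : Fin s → ℝ}

private lemma memI_convex {x y z : ℝ} (hx : memI S1 S2 S3 S4 d x) (hy : memI S1 S2 S3 S4 d y)
    (h1 : x ≤ z) (h2 : z ≤ y) : memI S1 S2 S3 S4 d z :=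
  ⟨fun i hi => lt_of_lt_of_le (hx.1 i hi) h1, fun i hi => lt_of_le_of_lt h2 (hy.2 i hi)⟩

private lemma gFun_hasDerivAt {z : ℝ} (hz : memI S1 S2 S3 S4 d z) :
    HasDerivAt (gFun S1 S2 S3 S4 a d) (gDeriv S1 S2 S3 S4 a d z) z := by
  have h14 : ∀ i ∈ S1 ∪ S4, 0 < z + d i := fun i hi => by have := hz.1 i hi; linarith
  have h23 : ∀ i ∈ S2 ∪ S3, 0 < d i - z := fun i hi => by have := hz.2 i hi; linarith
  have H1 : ∀ i ∈ S1 ∪ S4,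
      HasDerivAt (fun y => a i * Real.log (y + d i)) (a i / (z + d i)) z := by
    intro i hi
    have h := ((Real.hasDerivAt_log (ne_of_gt (h14 i hi))).comp z
      ((hasDerivAt_id z).add_const (d i))).const_mul (a i)
    exact h.congr_deriv (by ring)
  have H2 : ∀ i ∈ S2 ∪ S3,
      HasDerivAt (fun y => a i * Real.log (d i - y)) (-(a i / (d i - z))) z := by
    intro i hi
    have hin : HasDerivAt (fun y : ℝ => d i - y) (0 - 1) z :=
      (hasDerivAt_const z (d i)).sub (hasDerivAt_id z)
    have h := ((Real.hasDerivAt_log (ne_of_gt (h23 i hi))).comp z hin).const_mul (a i)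
    exact h.congr_deriv (by ring)
  have HS1 : HasDerivAt (fun y => ∑ i ∈ S1, a i * Real.log (y + d i))
      (∑ i ∈ S1, a i / (z + d i)) z :=
    HasDerivAt.fun_sum (fun i hi => H1 i (Finset.mem_union_left _ hi))
  have HS4 : HasDerivAt (fun y => ∑ i ∈ S4, a i * Real.log (y + d i))
      (∑ i ∈ S4, a i / (z + d i)) z :=
    HasDerivAt.fun_sum (fun i hi => H1 i (Finset.mem_union_right _ hi))
  have HS2 : HasDerivAt (fun y => ∑ i ∈ S2, a i * Real.log (d i - y))
      (∑ i ∈ S2, -(a i / (d i - z))) z :=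
    HasDerivAt.fun_sum (fun i hi => H2 i (Finset.mem_union_left _ hi))
  have HS3 : HasDerivAt (fun y => ∑ i ∈ S3, a i * Real.log (d i - y))
      (∑ i ∈ S3, -(a i / (d i - z))) z :=
    HasDerivAt.fun_sum (fun i hi => H2 i (Finset.mem_union_right _ hi))
  have h := ((HS1.sub HS2).add HS3).sub HS4
  have hval : gDeriv S1 S2 S3 S4 a d z =
      ∑ i ∈ S1, a i / (z + d i) - ∑ i ∈ S2, -(a i / (d i - z))
        + ∑ i ∈ S3, -(a i / (d i - z)) - ∑ i ∈ S4, a i / (z + d i) := by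
    simp [gDeriv, Finset.sum_neg_distrib]
    ring
  rw [hval]
  exact h

private lemma gDeriv_continuousAt {z : ℝ} (hz : memI S1 S2 S3 S4 d z) :
    ContinuousAt (gDeriv S1 S2 S3 S4 a d) z := by
  have h14 : ∀ i ∈ S1 ∪ S4, z + d i ≠ 0 := fun i hi => by
    have := hz.1 i hi; intro h; linarith
  have h23 : ∀ i ∈ S2 ∪ S3, d i - z ≠ 0 := fun i hi => by
    have := hz.2 i hi; intro h; linarith
  have H : ∀ S : Finset (Fin s), (∀ i ∈ S, z + d i ≠ 0) →
      ContinuousAt (fun y => ∑ i ∈ S, a i / (y + d i)) z := by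
    intro S hS
    exact tendsto_finset_sum S fun i hi =>
      continuousAt_const.div (continuousAt_id.add continuousAt_const) (hS i hi)
  have H' : ∀ S : Finset (Fin s), (∀ i ∈ S, d i - z ≠ 0) →
      ContinuousAt (fun y => ∑ i ∈ S, a i / (d i - y)) z := by
    intro S hS
    exact tendsto_finset_sum S fun i hi =>
      continuousAt_const.div (continuousAt_const.sub continuousAt_id) (hS i hi)
  have h1 := H S1 (fun i hi => h14 i (Finset.mem_union_left _ hi))
  have h4 := H S4 (fun i hi => h14 i (Finset.mem_union_right _ hi))
  have h2 := H' S2 (fun i hi => h23 i (Finset.mem_union_left _ hi))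
  have h3 := H' S3 (fun i hi => h23 i (Finset.mem_union_right _ hi))
  exact ((h1.add h2).sub h3).sub h4

private lemma rightFilter_neBot : (rightFilter S2 S3 d).NeBot := by
  unfold rightFilter
  split_ifs with h
  · exact nhdsLT_neBot _
  · exact Filter.atTop_neBot

open Set Filter in
private lemma right_eventually {t : ℝ} (ht : memI S1 S2 S3 S4 d t) :
    ∀ᶠ z in rightFilter S2 S3 d, memI S1 S2 S3 S4 d z ∧ t < z := by
  unfold rightFilter
  split_ifs with h
  · have hR : t < (S2 ∪ S3).inf' h d := (Finset.lt_inf'_iff h).2 (fun i hi => ht.2 i hi)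
    have hmem : Ioo t ((S2 ∪ S3).inf' h d) ∈
        nhdsWithin ((S2 ∪ S3).inf' h d) (Iio ((S2 ∪ S3).inf' h d)) :=
      Ioo_mem_nhdsLT_of_mem ⟨hR, le_refl _⟩
    filter_upwards [hmem] with z hz
    exact ⟨⟨fun i hi => lt_trans (ht.1 i hi) hz.1,
      fun i hi => lt_of_lt_of_le hz.2 (Finset.inf'_le _ hi)⟩, hz.1⟩
  · filter_upwards [eventually_gt_atTop t] with z hz
    exact ⟨⟨fun i hi => lt_trans (ht.1 i hi) hz, fun i hi => absurd ⟨i, hi⟩ h⟩, hz⟩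

end gAux

/-- Lemma 4.2(ii): if `g → -∞` at both endpoints, `g' → +∞` at `𝓛⁺` and `g' → -∞` at `𝓡⁻`,
then there is a level `K` attained at two distinct points of `I` with negative derivative
iff there are `z̃₁ < z̃₂` in `I` with `g'(z̃₁) < 0` and `g'(z̃₂) > 0`. -/
theorem lemma42_ii
    {s : ℕ} (hs : 0 < s)
    (S1 S2 S3 S4 : Finset (Fin s))
    (h12 : Disjoint S1 S2) (h13 : Disjoint S1 S3) (h14 : Disjoint S1 S4)
    (h23 : Disjoint S2 S3) (h24 : Disjoint S2 S4) (h34 : Disjoint S3 S4)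
    (hcover : S1 ∪ S2 ∪ S3 ∪ S4 = Finset.univ)
    (a : Fin s → ℝ) (ha : ∀ i, 0 < a i)
    (d : Fin s → ℝ)
    (hIne : ∃ z : ℝ, memI S1 S2 S3 S4 d z)
    (hgL : Filter.Tendsto (gFun S1 S2 S3 S4 a d) (leftFilter S1 S4 d) Filter.atBot)
    (hgR : Filter.Tendsto (gFun S1 S2 S3 S4 a d) (rightFilter S2 S3 d) Filter.atBot)
    (hdL : Filter.Tendsto (gDeriv S1 S2 S3 S4 a d) (leftFilter S1 S4 d) Filter.atTop)
    (hdR : Filter.Tendsto (gDeriv S1 S2 S3 S4 a d) (rightFilter S2 S3 d) Filter.atBot) :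
    (∃ K z₁ z₂ : ℝ, z₁ ≠ z₂ ∧
        memI S1 S2 S3 S4 d z₁ ∧ memI S1 S2 S3 S4 d z₂ ∧
        gFun S1 S2 S3 S4 a d z₁ = K ∧ gFun S1 S2 S3 S4 a d z₂ = K ∧
        gDeriv S1 S2 S3 S4 a d z₁ < 0 ∧ gDeriv S1 S2 S3 S4 a d z₂ < 0) ↔
      ∃ zt₁ zt₂ : ℝ, zt₁ < zt₂ ∧
        memI S1 S2 S3 S4 d zt₁ ∧ memI S1 S2 S3 S4 d zt₂ ∧
        gDeriv S1 S2 S3 S4 a d zt₁ < 0 ∧ 0 < gDeriv S1 S2 S3 S4 a d zt₂ := by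
  have hder : ∀ z : ℝ, memI S1 S2 S3 S4 d z →
      HasDerivAt (gFun S1 S2 S3 S4 a d) (gDeriv S1 S2 S3 S4 a d z) z :=
    fun _ hz => gFun_hasDerivAt hz
  set f := gFun S1 S2 S3 S4 a d with hfdef
  set f' := gDeriv S1 S2 S3 S4 a d with hf'def
  constructor
  · rintro ⟨K, z₁, z₂, hne, hmA, hmB, heA, heB, hnA, hnB⟩
    have core : ∀ u v : ℝ, u < v → memI S1 S2 S3 S4 d u → memI S1 S2 S3 S4 d v →
        f u = f v → f' u < 0 → f' v < 0 →
        ∃ zt₁ zt₂ : ℝ, zt₁ < zt₂ ∧ memI S1 S2 S3 S4 d zt₁ ∧ memI S1 S2 S3 S4 d zt₂ ∧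
          f' zt₁ < 0 ∧ 0 < f' zt₂ := by
      intro u v huv hu hv hfe hnu hnv
      have hd : ∀ x ∈ Set.Icc u v, HasDerivAt f (f' x) x := fun x hx =>
        hder x (memI_convex hu hv hx.1 hx.2)
      have hc : ContinuousOn f (Set.Icc u v) := fun x hx =>
        (hd x hx).continuousAt.continuousWithinAt
      obtain ⟨w, hw, hminw⟩ := isCompact_Icc.exists_isMinOn
        ⟨u, Set.left_mem_Icc.2 huv.le⟩ hc
      obtain ⟨x0, hx01, hx02, hx03⟩ := slope_right_neg (hd u ⟨le_rfl, huv.le⟩) hnu huv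
      have hwlt : f w < f v := by
        have h1 : f w ≤ f x0 := isMinOn_iff.1 hminw x0 ⟨hx01.le, hx02.le⟩
        rw [← hfe]; linarith
      have hwv : w < v := lt_of_le_of_ne hw.2 (fun h => by rw [h] at hwlt; exact lt_irrefl _ hwlt)
      obtain ⟨ζ, hζ, hsl⟩ := exists_hasDerivAt_eq_slope f f' hwv
        (hc.mono (Set.Icc_subset_Icc hw.1 le_rfl))
        (fun x hx => hd x ⟨le_trans hw.1 hx.1.le, hx.2.le⟩)
      refine ⟨u, ζ, lt_of_le_of_lt hw.1 hζ.1, hu,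
        memI_convex hu hv (le_trans hw.1 hζ.1.le) hζ.2.le, hnu, ?_⟩
      rw [hsl]
      exact div_pos (by linarith) (by linarith [hζ.1, hζ.2])
    rcases hne.lt_or_gt with h | h
    · exact core z₁ z₂ h hmA hmB (heA.trans heB.symm) hnA hnB
    · obtain ⟨zt₁, zt₂, h1, h2, h3, h4, h5⟩ :=
        core z₂ z₁ h hmB hmA (heB.trans heA.symm) hnB hnA
      exact ⟨zt₁, zt₂, h1, h2, h3, h4, h5⟩
  · rintro ⟨t₁, t₂, ht, hmt1, hmt2, hn1, hp2⟩
    have hd12 : ∀ x ∈ Set.Icc t₁ t₂, HasDerivAt f (f' x) x := fun x hx =>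
      hder x (memI_convex hmt1 hmt2 hx.1 hx.2)
    have hc12 : ContinuousOn f (Set.Icc t₁ t₂) := fun x hx =>
      (hd12 x hx).continuousAt.continuousWithinAt
    obtain ⟨q, hq, hminq⟩ := isCompact_Icc.exists_isMinOn
      ⟨t₁, Set.left_mem_Icc.2 ht.le⟩ hc12
    obtain ⟨x0, hx01, hx02, hx03⟩ := slope_right_neg (hd12 t₁ ⟨le_rfl, ht.le⟩) hn1 ht
    have hv1 : f q < f t₁ :=
      lt_of_le_of_lt (isMinOn_iff.1 hminq x0 ⟨hx01.le, hx02.le⟩) hx03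
    obtain ⟨x1, hx11, hx12, hx13⟩ := slope_left_lt (hd12 t₂ ⟨ht.le, le_rfl⟩) hp2 ht
    have hv2 : f q < f t₂ :=
      lt_of_le_of_lt (isMinOn_iff.1 hminq x1 ⟨hx11.le, hx12.le⟩) hx13
    have hq1 : t₁ < q := lt_of_le_of_ne hq.1
      (fun h => by rw [← h] at hv1; exact lt_irrefl _ hv1)
    haveI : (rightFilter S2 S3 d).NeBot := rightFilter_neBot
    obtain ⟨c', ⟨hc'I, hc'gt⟩, hc'de, hc'val⟩ :=
      ((right_eventually hmt2).and
        ((hdR.eventually_lt_atBot 0).and (hgR.eventually_lt_atBot (f q)))).exists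
    obtain ⟨α, hα1, hα2⟩ := exists_between (lt_min hv1 hv2)
    obtain ⟨β, hβ1, hβ2⟩ := exists_between hα2
    have hd2c : ∀ x ∈ Set.Icc t₂ c', HasDerivAt f (f' x) x := fun x hx =>
      hder x (memI_convex hmt2 hc'I hx.1 hx.2)
    obtain ⟨ζ₂, hζ₂, hζ₂d, hζ₂a, hζ₂b⟩ := lemA hc'gt hd2c hβ1
      (le_of_lt (lt_of_lt_of_le hβ2 (min_le_right _ _)))
      (le_of_lt (lt_trans hc'val hα1))
    have hmζ₂ : memI S1 S2 S3 S4 d ζ₂ := memI_convex hmt2 hc'I hζ₂.1.le hζ₂.2.le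
    have hcd : ContinuousAt f' ζ₂ := gDeriv_continuousAt hmζ₂
    have e1 : ∀ᶠ x in nhds ζ₂, f' x < 0 := hcd.eventually (eventually_lt_nhds hζ₂d)
    have e2 : ∀ᶠ x in nhds ζ₂, x ∈ Set.Ioo t₂ c' := isOpen_Ioo.eventually_mem hζ₂
    obtain ⟨ε, hεpos, hball⟩ := Metric.eventually_nhds_iff.1 (e1.and e2)
    set η := ε / 2 with hηdef
    have hηpos : 0 < η := by positivity
    have key : ∀ x ∈ Set.Icc (ζ₂ - η) (ζ₂ + η), f' x < 0 ∧ x ∈ Set.Ioo t₂ c' := by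
      intro x hx
      apply hball
      rw [Real.dist_eq, abs_lt]
      constructor
      · linarith [hx.1]
      · linarith [hx.2]
    have hdIcc : ∀ x ∈ Set.Icc (ζ₂ - η) (ζ₂ + η), HasDerivAt f (f' x) x := fun x hx =>
      hder x (memI_convex hmt2 hc'I (key x hx).2.1.le (key x hx).2.2.le)
    have hcIcc : ContinuousOn f (Set.Icc (ζ₂ - η) (ζ₂ + η)) := fun x hx =>
      (hdIcc x hx).continuousAt.continuousWithinAt
    have hlt1 : f ζ₂ < f (ζ₂ - η) := by
      obtain ⟨c₀, hc₀, hsl⟩ := exists_hasDerivAt_eq_slope f f'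
        (show ζ₂ - η < ζ₂ by linarith)
        (hcIcc.mono (Set.Icc_subset_Icc le_rfl (by linarith)))
        (fun x hx => hdIcc x ⟨hx.1.le, by linarith [hx.2]⟩)
      have hneg : f' c₀ < 0 := (key c₀ ⟨hc₀.1.le, by linarith [hc₀.2]⟩).1
      rw [hsl] at hneg
      rcases div_neg_iff.1 hneg with ⟨h1, h2⟩ | ⟨h1, h2⟩ <;> linarith
    have hlt2 : f (ζ₂ + η) < f ζ₂ := by
      obtain ⟨c₀, hc₀, hsl⟩ := exists_hasDerivAt_eq_slope f f'
        (show ζ₂ < ζ₂ + η by linarith)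
        (hcIcc.mono (Set.Icc_subset_Icc (by linarith) le_rfl))
        (fun x hx => hdIcc x ⟨by linarith [hx.1], hx.2.le⟩)
      have hneg : f' c₀ < 0 := (key c₀ ⟨by linarith [hc₀.1], hc₀.2.le⟩).1
      rw [hsl] at hneg
      rcases div_neg_iff.1 hneg with ⟨h1, h2⟩ | ⟨h1, h2⟩ <;> linarith
    have hαβ' : max α (f (ζ₂ + η)) < min β (f (ζ₂ - η)) :=
      max_lt (lt_min hβ1 (lt_trans hζ₂a hlt1)) (lt_min (lt_trans hlt2 hζ₂b) (lt_trans hlt2 hlt1))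
    have hd1q : ∀ x ∈ Set.Icc t₁ q, HasDerivAt f (f' x) x := fun x hx =>
      hd12 x ⟨hx.1, hx.2.trans hq.2⟩
    obtain ⟨ζ₁, hζ₁, hζ₁d, hζ₁a, hζ₁b⟩ := lemA hq1 hd1q hαβ'
      (le_of_lt (lt_of_le_of_lt (min_le_left _ _) (lt_of_lt_of_le hβ2 (min_le_left _ _))))
      (le_of_lt (lt_of_lt_of_le hα1 (le_max_left _ _)))
    have hK : f ζ₁ ∈ Set.Ioo (f (ζ₂ + η)) (f (ζ₂ - η)) :=
      ⟨lt_of_le_of_lt (le_max_right _ _) hζ₁a, lt_of_lt_of_le hζ₁b (min_le_right _ _)⟩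
    obtain ⟨z₂, hz₂mem, hz₂val⟩ := intermediate_value_Ioo'
      (show ζ₂ - η ≤ ζ₂ + η by linarith) hcIcc hK
    have hz₂Icc : z₂ ∈ Set.Icc (ζ₂ - η) (ζ₂ + η) := Set.Ioo_subset_Icc_self hz₂mem
    have hz₂I : z₂ ∈ Set.Ioo t₂ c' := (key z₂ hz₂Icc).2
    refine ⟨f ζ₁, ζ₁, z₂,
      ne_of_lt (lt_trans (lt_of_lt_of_le hζ₁.2 hq.2) hz₂I.1),
      memI_convex hmt1 hmt2 hζ₁.1.le (hζ₁.2.le.trans hq.2),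
      memI_convex hmt2 hc'I hz₂I.1.le hz₂I.2.le,
      rfl, hz₂val, hζ₁d, (key z₂ hz₂Icc).1⟩
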